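/- Let λ > 0, c' ∈ ℝⁿ, c ∈ ℝ, h(x) = λ|x|² + ⟨c',x⟩ + c > 0. Then F(x,y) = sqrt(4λ h(x)|y|² - 4λ²⟨x,y⟩² - 4λ⟨c',y⟩⟨x,y⟩ - ⟨c',y⟩²)/(2h(x)) satisfies Hamel's equations y^j ∂²F/(∂y^k∂x^j) = ∂F/∂x^k on the open set where the radicand is positive, hence is projectively flat, with projective factor P = -(2λ⟨x,y⟩ + ⟨c',y⟩)/(2h(x)). -/

import Mathlib

/-!
Write `Q = ⟨∇h(x), y⟩ = 2λ⟨x,y⟩ + ⟨c',y⟩` and `R = 4λ h |y|² - Q²` for the radicand, so that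
`F = √R / (2h)`. Since the Hessian of `h` is `2λ·I`, `∂_{x_j} Q = 2λ y_j`, and then
`y·∇ₓR = 4λ (Q |y|² - Q |y|²) = 0`; hence `y·∇ₓF = -Q F / h`, which gives the projective factor.
By the product rule, Hamel's equations say `∂_{y_k}(y·∇ₓF) = 2 ∂_{x_k}F`, and with the explicit
`∇ₓF` the two sides differ by `∂_k h · (4λ h |y|² - Q² - R) / (2h²√R) = 0`.
-/

open Finset

/-- Partial derivative of `f` with respect to the `i`-th coordinate at `x`. -/
noncomputable def pd {n : ℕ} (i : Fin n) (f : (Fin n → ℝ) → ℝ) (x : Fin n → ℝ) : ℝ :=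
  deriv (fun t => f (Function.update x i t)) (x i)

/-- Partial derivative with respect to the `i`-th `x`-coordinate. -/
noncomputable def pdx {n : ℕ} (i : Fin n) (f : (Fin n → ℝ) → (Fin n → ℝ) → ℝ)
    (x y : Fin n → ℝ) : ℝ :=
  deriv (fun t => f (Function.update x i t) y) (x i)

/-- Partial derivative with respect to the `i`-th `y`-coordinate. -/
noncomputable def pdy {n : ℕ} (i : Fin n) (f : (Fin n → ℝ) → (Fin n → ℝ) → ℝ)
    (x y : Fin n → ℝ) : ℝ :=
  deriv (fun t => f x (Function.update y i t)) (y i)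

open Function Filter Topology

theorem HasDerivAt.dotProduct {𝕜 ι : Type*} [NontriviallyNormedField 𝕜] [Fintype ι]
    {u w : 𝕜 → ι → 𝕜} {u' w' : ι → 𝕜} {a : 𝕜} (hu : HasDerivAt u u' a) (hw : HasDerivAt w w' a) :
    HasDerivAt (fun t => u t ⬝ᵥ w t) (u' ⬝ᵥ w a + u a ⬝ᵥ w') a := by
  exact (HasDerivAt.fun_sum (u := univ) fun i _ =>
    (hasDerivAt_pi.1 hu i).fun_mul (hasDerivAt_pi.1 hw i)).congr_deriv sum_add_distrib

@[fun_prop]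
theorem DifferentiableAt.dotProduct {𝕜 ι E : Type*} [NontriviallyNormedField 𝕜] [Fintype ι]
    [NormedAddCommGroup E] [NormedSpace 𝕜 E] {u w : E → ι → 𝕜} {a : E}
    (hu : DifferentiableAt 𝕜 u a) (hw : DifferentiableAt 𝕜 w a) :
    DifferentiableAt 𝕜 (fun t => u t ⬝ᵥ w t) a := by
  unfold _root_.dotProduct
  have := differentiableAt_pi.1 hu
  have := differentiableAt_pi.1 hw
  fun_prop

theorem sum_mul_pd {n : ℕ} (g : Fin n → (Fin n → ℝ) → ℝ) (y : Fin n → ℝ) (k : Fin n)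
    (hg : ∀ j, DifferentiableAt ℝ (fun t => g j (update y k t)) (y k)) :
    ∑ j, y j * pd k (g j) y = pd k (fun y' => ∑ j, y' j * g j y') y - g k y := by
  have hsum := HasDerivAt.fun_sum (u := univ) fun j _ =>
    (hasDerivAt_pi.1 (hasDerivAt_update y k (y k)) j).fun_mul (hg j).hasDerivAt
  simp only [update_eq_self] at hsum
  rw [pd, hsum.deriv, sum_add_distrib]
  simp [Pi.single_apply, pd]

namespace IsotropicFamily

variable {n : ℕ} (lam : ℝ) (c' : Fin n → ℝ) (c : ℝ)

def h (x : Fin n → ℝ) : ℝ := lam * (x ⬝ᵥ x) + c' ⬝ᵥ x + c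

def gradH (x : Fin n → ℝ) : Fin n → ℝ := (2 * lam) • x + c'

def Q (x y : Fin n → ℝ) : ℝ := gradH lam c' x ⬝ᵥ y

def R (x y : Fin n → ℝ) : ℝ := 4 * lam * h lam c' c x * (y ⬝ᵥ y) - Q lam c' x y ^ 2

noncomputable def F (x y : Fin n → ℝ) : ℝ := √(R lam c' c x y) / (2 * h lam c' c x)

noncomputable def gradXF (x y : Fin n → ℝ) : Fin n → ℝ :=
  (lam * (y ⬝ᵥ y) / (h lam c' c x * √(R lam c' c x y))
      - √(R lam c' c x y) / (2 * h lam c' c x ^ 2)) • gradH lam c' x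
    - (lam * Q lam c' x y / (h lam c' c x * √(R lam c' c x y))) • y

variable {lam c' c}

theorem hasDerivAt_h_update (x : Fin n → ℝ) (j : Fin n) :
    HasDerivAt (fun t => h lam c' c (update x j t)) (gradH lam c' x j) (x j) := by
  have hu := hasDerivAt_update x j (x j)
  have := (((hu.dotProduct hu).const_mul lam).add
    ((hasDerivAt_const _ c').dotProduct hu)).add_const c
  simp only [update_eq_self, dotProduct_single_one, single_one_dotProduct, zero_dotProduct] at this
  exact this.congr_deriv (by simp [gradH]; ring)

theorem hasDerivAt_Q_update_left (x y : Fin n → ℝ) (j : Fin n) :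
    HasDerivAt (fun t => Q lam c' (update x j t) y) (2 * lam * y j) (x j) := by
  have := (((hasDerivAt_update x j (x j)).const_smul (2 * lam)).add_const c').dotProduct
    (hasDerivAt_const (x j) y)
  exact this.congr_deriv (by simp [smul_dotProduct])

theorem hasDerivAt_Q_update_right (x y : Fin n → ℝ) (k : Fin n) :
    HasDerivAt (fun t => Q lam c' x (update y k t)) (gradH lam c' x k) (y k) := by
  have := (hasDerivAt_const (y k) (gradH lam c' x)).dotProduct (hasDerivAt_update y k (y k))
  exact this.congr_deriv (by simp)

theorem hasDerivAt_R_update_left (x y : Fin n → ℝ) (j : Fin n) :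
    HasDerivAt (fun t => R lam c' c (update x j t) y)
      (4 * lam * (gradH lam c' x j * (y ⬝ᵥ y) - Q lam c' x y * y j)) (x j) := by
  have hh := hasDerivAt_h_update (lam := lam) (c' := c') (c := c) x j
  have := ((hh.const_mul (4 * lam)).mul_const (y ⬝ᵥ y)).sub
    ((hasDerivAt_Q_update_left (lam := lam) (c' := c') x y j).pow 2)
  simp only [update_eq_self] at this
  exact this.congr_deriv (by ring)

theorem hasDerivAt_R_update_right (x y : Fin n → ℝ) (k : Fin n) :
    HasDerivAt (fun t => R lam c' c x (update y k t))
      (2 * (4 * lam * h lam c' c x * y k - Q lam c' x y * gradH lam c' x k)) (y k) := by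
  have hu := hasDerivAt_update y k (y k)
  have := ((hu.dotProduct hu).const_mul (4 * lam * h lam c' c x)).sub
    ((hasDerivAt_Q_update_right (lam := lam) (c' := c') x y k).pow 2)
  simp only [update_eq_self, dotProduct_single_one, single_one_dotProduct] at this
  exact this.congr_deriv (by ring)

theorem hasDerivAt_F_update_left {x y : Fin n → ℝ} (hx : h lam c' c x ≠ 0)
    (hR : 0 < R lam c' c x y) (j : Fin n) :
    HasDerivAt (fun t => F lam c' c (update x j t) y) (gradXF lam c' c x y j) (x j) := by
  have hs : √(R lam c' c x y) ≠ 0 := (Real.sqrt_pos.2 hR).ne'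
  have := ((hasDerivAt_R_update_left x y j).sqrt (by simpa using hR.ne')).div
    ((hasDerivAt_h_update (lam := lam) (c' := c') (c := c) x j).const_mul 2) (by simpa using hx)
  simp only [update_eq_self] at this
  refine this.congr_deriv ?_
  simp only [gradXF, Pi.sub_apply, Pi.smul_apply, smul_eq_mul]
  field_simp
  rw [Real.sq_sqrt hR.le]
  ring

theorem pdx_F {x y : Fin n → ℝ} (hx : h lam c' c x ≠ 0) (hR : 0 < R lam c' c x y) (j : Fin n) :
    pdx j (F lam c' c) x y = gradXF lam c' c x y j :=
  (hasDerivAt_F_update_left hx hR j).deriv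

theorem dotProduct_gradXF (x y : Fin n → ℝ) :
    y ⬝ᵥ gradXF lam c' c x y = -(Q lam c' x y * √(R lam c' c x y)) / (2 * h lam c' c x ^ 2) := by
  simp only [gradXF, dotProduct_sub, dotProduct_smul, smul_eq_mul]
  rw [dotProduct_comm y (gradH lam c' x), ← Q]
  ring

theorem differentiableAt_gradXF {x y : Fin n → ℝ} (hx : h lam c' c x ≠ 0)
    (hR : 0 < R lam c' c x y) : DifferentiableAt ℝ (gradXF lam c' c x) y := by
  have hR' := hR.ne'
  have hRd : DifferentiableAt ℝ (R lam c' c x) y := by unfold R Q; fun_prop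
  have hd : h lam c' c x * √(R lam c' c x y) ≠ 0 := mul_ne_zero hx (by positivity)
  unfold gradXF Q
  fun_prop (disch := assumption)

theorem hasDerivAt_dotProduct_gradXF_update {x y : Fin n → ℝ} (hR : 0 < R lam c' c x y)
    (k : Fin n) :
    HasDerivAt (fun t => update y k t ⬝ᵥ gradXF lam c' c x (update y k t))
      (-(gradH lam c' x k * √(R lam c' c x y)
          + Q lam c' x y * (4 * lam * h lam c' c x * y k - Q lam c' x y * gradH lam c' x k)
            / √(R lam c' c x y)) / (2 * h lam c' c x ^ 2)) (y k) := by
  have hs : √(R lam c' c x y) ≠ 0 := (Real.sqrt_pos.2 hR).ne'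
  simp only [dotProduct_gradXF]
  have := (((hasDerivAt_Q_update_right (lam := lam) (c' := c') x y k).fun_mul
    ((hasDerivAt_R_update_right (c := c) x y k).sqrt (by simpa using hR.ne'))).neg).div_const
    (2 * h lam c' c x ^ 2)
  simp only [update_eq_self] at this
  refine this.congr_deriv ?_
  field_simp

theorem hamel_equation {x y : Fin n → ℝ} (hx : h lam c' c x ≠ 0) (hR : 0 < R lam c' c x y)
    (k : Fin n) :
    ∑ j, y j * pdy k (fun x' y' => pdx j (F lam c' c) x' y') x y = pdx k (F lam c' c) x y := by
  have hnear : ∀ᶠ t in 𝓝 (y k), 0 < R lam c' c x (update y k t) :=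
    (hasDerivAt_R_update_right x y k).continuousAt.eventually
      (lt_mem_nhds (by simpa using hR))
  have hpdx : ∀ᶠ t in 𝓝 (y k), ∀ j,
      pdx j (F lam c' c) x (update y k t) = gradXF lam c' c x (update y k t) j :=
    hnear.mono fun t ht j => pdx_F hx ht j
  have hdiff (j : Fin n) :
      DifferentiableAt ℝ (fun t => pdx j (F lam c' c) x (update y k t)) (y k) := by
    refine DifferentiableAt.congr_of_eventuallyEq ?_ (hpdx.mono fun t ht => ht j)
    have hupd := (hasDerivAt_update y k (y k)).differentiableAt
    rw [← update_eq_self k y] at hR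
    exact (differentiableAt_apply j _).comp _ ((differentiableAt_gradXF hx hR).comp _ hupd)
  change ∑ j, y j * pd k (fun y' => pdx j (F lam c' c) x y') y = _
  rw [sum_mul_pd _ y k hdiff, pd, pdx_F hx hR]
  have hsum : (fun t => ∑ j, update y k t j * pdx j (F lam c' c) x (update y k t))
      =ᶠ[𝓝 (y k)] fun t => update y k t ⬝ᵥ gradXF lam c' c x (update y k t) :=
    hpdx.mono fun t ht => by simp only [ht]; rfl
  rw [hsum.deriv_eq, (hasDerivAt_dotProduct_gradXF_update hR k).deriv]
  have hs : √(R lam c' c x y) ≠ 0 := (Real.sqrt_pos.2 hR).ne'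
  simp only [gradXF, Pi.sub_apply, Pi.smul_apply, smul_eq_mul]
  field_simp
  rw [Real.sq_sqrt hR.le, R]
  ring

theorem projectiveFactor_eq {x y : Fin n → ℝ} (hx : h lam c' c x ≠ 0) (hR : 0 < R lam c' c x y) :
    (∑ k, y k * pdx k (F lam c' c) x y) / (2 * F lam c' c x y)
      = -Q lam c' x y / (2 * h lam c' c x) := by
  have hs : √(R lam c' c x y) ≠ 0 := (Real.sqrt_pos.2 hR).ne'
  simp only [pdx_F hx hR]
  change y ⬝ᵥ gradXF lam c' c x y / _ = _
  rw [dotProduct_gradXF, F]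
  field_simp

end IsotropicFamily

theorem stmt15_general (n : ℕ) (lam : ℝ) (c' : Fin n → ℝ) (c : ℝ)
    (h : (Fin n → ℝ) → ℝ)
    (hh : ∀ x, h x = lam * (∑ i, (x i) ^ 2) + (∑ k, c' k * x k) + c)
    (F : (Fin n → ℝ) → (Fin n → ℝ) → ℝ)
    (hF : ∀ x y, F x y =
      Real.sqrt (4 * lam * h x * (∑ i, (y i) ^ 2)
          - 4 * lam ^ 2 * (∑ i, x i * y i) ^ 2
          - 4 * lam * (∑ k, c' k * y k) * (∑ i, x i * y i)
          - (∑ k, c' k * y k) ^ 2) / (2 * h x)) :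
    ∀ x y : Fin n → ℝ, h x > 0 →
      0 < 4 * lam * h x * (∑ i, (y i) ^ 2)
          - 4 * lam ^ 2 * (∑ i, x i * y i) ^ 2
          - 4 * lam * (∑ k, c' k * y k) * (∑ i, x i * y i)
          - (∑ k, c' k * y k) ^ 2 →
      (∀ k, (∑ j, y j * pdy k (fun x' y' => pdx j F x' y') x y) = pdx k F x y) ∧
      (∑ k, y k * pdx k F x y) / (2 * F x y) =
        -(2 * lam * (∑ i, x i * y i) + ∑ k, c' k * y k) / (2 * h x) := by
  have hsq (v : Fin n → ℝ) : ∑ i, v i ^ 2 = v ⬝ᵥ v := by simp only [dotProduct, sq]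
  have hQ (x y : Fin n → ℝ) :
      IsotropicFamily.Q lam c' x y = 2 * lam * (∑ i, x i * y i) + ∑ k, c' k * y k := by
    simp only [IsotropicFamily.Q, IsotropicFamily.gradH, add_dotProduct, smul_dotProduct,
      smul_eq_mul]
    rfl
  obtain rfl : h = IsotropicFamily.h lam c' c := funext fun x => by
    rw [hh, hsq]; rfl
  have hR (x y : Fin n → ℝ) : 4 * lam * IsotropicFamily.h lam c' c x * (∑ i, y i ^ 2)
      - 4 * lam ^ 2 * (∑ i, x i * y i) ^ 2 - 4 * lam * (∑ k, c' k * y k) * (∑ i, x i * y i)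
      - (∑ k, c' k * y k) ^ 2 = IsotropicFamily.R lam c' c x y := by
    rw [IsotropicFamily.R, hQ, hsq]; ring
  obtain rfl : F = IsotropicFamily.F lam c' c := funext₂ fun x y => by rw [hF, hR]; rfl
  intro x y hx hpos
  rw [hR] at hpos
  exact ⟨IsotropicFamily.hamel_equation hx.ne' hpos,
    by rw [IsotropicFamily.projectiveFactor_eq hx.ne' hpos, hQ]⟩

/-- The special family (`c_{ij} = λ δ_{ij}`) satisfies Hamel's equations, hence is
projectively flat, with projective factor `P = -(2λ⟨x,y⟩+⟨c',y⟩)/(2h)`. -/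
theorem stmt15 (n : ℕ) (hn : 1 ≤ n) (lam : ℝ) (hlam : 0 < lam) (c' : Fin n → ℝ) (c : ℝ)
    (h : (Fin n → ℝ) → ℝ)
    (hh : ∀ x, h x = lam * (∑ i, (x i) ^ 2) + (∑ k, c' k * x k) + c)
    (F : (Fin n → ℝ) → (Fin n → ℝ) → ℝ)
    (hF : ∀ x y, F x y =
      Real.sqrt (4 * lam * h x * (∑ i, (y i) ^ 2)
          - 4 * lam ^ 2 * (∑ i, x i * y i) ^ 2
          - 4 * lam * (∑ k, c' k * y k) * (∑ i, x i * y i)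
          - (∑ k, c' k * y k) ^ 2) / (2 * h x)) :
    ∀ x y : Fin n → ℝ, h x > 0 →
      0 < 4 * lam * h x * (∑ i, (y i) ^ 2)
          - 4 * lam ^ 2 * (∑ i, x i * y i) ^ 2
          - 4 * lam * (∑ k, c' k * y k) * (∑ i, x i * y i)
          - (∑ k, c' k * y k) ^ 2 →
      (∀ k, (∑ j, y j * pdy k (fun x' y' => pdx j F x' y') x y) = pdx k F x y) ∧
      (∑ k, y k * pdx k F x y) / (2 * F x y) =
        -(2 * lam * (∑ i, x i * y i) + ∑ k, c' k * y k) / (2 * h x) :=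
  stmt15_general n lam c' c h hh F hF
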